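/- (Lemma 1) Suppose two parent particles, each of invariant mass m₀, are produced; for each n ∈ {1,2}, parent n has four-momentum equal to the sum of a visible four-momentum (E_v⁽ⁿ⁾, p_v⁽ⁿ⁾) and an invisible four-momentum (E_i⁽ⁿ⁾, p_i⁽ⁿ⁾), all four daughter four-momenta being causal (E ≥ |p|). Let m_v⁽ⁿ⁾ and vT⁽ⁿ⁾ be the invariant mass and transverse momentum of visible system n, and let pTmiss be the sum of the transverse momenta of the two invisible four-momenta. Then mT2(v₁, v₂, pTmiss, 0, 0) ≤ m₀. -/

import Mathlib

open scoped RealInnerProductSpace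

/-- Transverse energy `e(m,p) = √(m² + |p|²)`. -/
noncomputable def transverseEnergy (m : ℝ) (p : EuclideanSpace ℝ (Fin 2)) : ℝ :=
  Real.sqrt (m ^ 2 + ‖p‖ ^ 2)

/-- Transverse mass `m_T(m_v, vT, m_i, qT)`. -/
noncomputable def transverseMass (mv : ℝ) (vT : EuclideanSpace ℝ (Fin 2))
    (mi : ℝ) (qT : EuclideanSpace ℝ (Fin 2)) : ℝ :=
  Real.sqrt (mv ^ 2 + mi ^ 2 +
    2 * (transverseEnergy mv vT * transverseEnergy mi qT - ⟪vT, qT⟫))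

/-- `mT2(v₁, v₂, pTmiss, m_i⁽¹⁾, m_i⁽²⁾)`: the infimum over all partitions
`qT⁽¹⁾ + qT⁽²⁾ = pTmiss` of the larger of the two transverse masses. -/
noncomputable def mT2 (mv1 : ℝ) (vT1 : EuclideanSpace ℝ (Fin 2))
    (mv2 : ℝ) (vT2 : EuclideanSpace ℝ (Fin 2))
    (ptmiss : EuclideanSpace ℝ (Fin 2)) (mi1 mi2 : ℝ) : ℝ :=
  sInf {r : ℝ | ∃ q1 q2 : EuclideanSpace ℝ (Fin 2), q1 + q2 = ptmiss ∧
    r = max (transverseMass mv1 vT1 mi1 q1) (transverseMass mv2 vT2 mi2 q2)}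

/-- Projection of a 3-momentum onto the transverse plane (first two coordinates). -/
noncomputable def projT (p : EuclideanSpace ℝ (Fin 3)) : EuclideanSpace ℝ (Fin 2) :=
  WithLp.toLp 2 (fun i : Fin 2 => p i.castSucc)

/-- Invariant mass `√(E² − |p|²)` of a 3+1 four-momentum `(E, p)`. -/
noncomputable def invariantMass (E : ℝ) (p : EuclideanSpace ℝ (Fin 3)) : ℝ :=
  Real.sqrt (E ^ 2 - ‖p‖ ^ 2)

/-! The true split `q⁽ⁿ⁾ = p_T(invisible n)` is admissible, so `mT2` is at most the larger of the
two true transverse masses, and each of these is at most `m₀`. With `z` the beam coordinate, the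
squared parent mass exceeds the squared transverse mass by `E_i² − |q|²` plus twice
`E_v E_i − (e_v |q_T| + p_v,z q_z)`; both are nonnegative, the second by Cauchy–Schwarz for the
pairs `(e_v, p_v,z)` and `(|q_T|, q_z)`, whose lengths are `E_v` and `|q| ≤ E_i`. -/
lemma mT2_le_max_transverseMass (mv1 : ℝ) (vT1 : EuclideanSpace ℝ (Fin 2))
    (mv2 : ℝ) (vT2 : EuclideanSpace ℝ (Fin 2)) (mi1 mi2 : ℝ)
    {ptmiss q1 q2 : EuclideanSpace ℝ (Fin 2)} (hq : q1 + q2 = ptmiss) :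
    mT2 mv1 vT1 mv2 vT2 ptmiss mi1 mi2 ≤
      max (transverseMass mv1 vT1 mi1 q1) (transverseMass mv2 vT2 mi2 q2) := by
  refine csInf_le ⟨0, ?_⟩ ⟨q1, q2, hq, rfl⟩
  rintro r ⟨q1, q2, -, rfl⟩
  exact (Real.sqrt_nonneg _).trans (le_max_left _ _)

lemma inner_eq_inner_projT_add (x y : EuclideanSpace ℝ (Fin 3)) :
    ⟪x, y⟫ = ⟪projT x, projT y⟫ + x 2 * y 2 := by
  simp [PiLp.inner_apply, projT, Fin.sum_univ_three, Fin.sum_univ_two, mul_comm]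

lemma norm_sq_eq_norm_projT_sq_add (x : EuclideanSpace ℝ (Fin 3)) :
    ‖x‖ ^ 2 = ‖projT x‖ ^ 2 + x 2 ^ 2 := by
  simpa only [real_inner_self_eq_norm_sq, sq] using inner_eq_inner_projT_add x x

lemma invariantMass_sq {E : ℝ} {p : EuclideanSpace ℝ (Fin 3)} (hp : ‖p‖ ≤ E) :
    invariantMass E p ^ 2 = E ^ 2 - ‖p‖ ^ 2 :=
  Real.sq_sqrt (by nlinarith [norm_nonneg p])

lemma transverseEnergy_sq_add_sq {E : ℝ} {p : EuclideanSpace ℝ (Fin 3)} (hp : ‖p‖ ≤ E) :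
    transverseEnergy (invariantMass E p) (projT p) ^ 2 + p 2 ^ 2 = E ^ 2 := by
  rw [transverseEnergy, Real.sq_sqrt (by positivity), invariantMass_sq hp,
    norm_sq_eq_norm_projT_sq_add p]
  ring

lemma mul_add_mul_le_mul_of_sq_add_sq_eq {x y u w a c : ℝ} (ha : 0 ≤ a) (hc : 0 ≤ c)
    (hxy : x ^ 2 + y ^ 2 = a ^ 2) (huw : u ^ 2 + w ^ 2 = c ^ 2) :
    x * u + y * w ≤ a * c := by
  have hsq : (x * u + y * w) ^ 2 ≤ (a * c) ^ 2 := by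
    nlinarith [sq_nonneg (x * w - y * u)]
  exact (abs_le_of_sq_le_sq' hsq (by positivity)).2

lemma transverseMass_le_invariantMass {Ev Ei : ℝ} {pv pinv : EuclideanSpace ℝ (Fin 3)}
    (hv : ‖pv‖ ≤ Ev) (hi : ‖pinv‖ ≤ Ei) :
    transverseMass (invariantMass Ev pv) (projT pv) 0 (projT pinv)
      ≤ invariantMass (Ev + Ei) (pv + pinv) := by
  set ev := transverseEnergy (invariantMass Ev pv) (projT pv)
  have hEv : 0 ≤ Ev := (norm_nonneg _).trans hv
  have hmassless : transverseEnergy 0 (projT pinv) = ‖projT pinv‖ := by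
    simp [transverseEnergy]
  have hcross : ev * ‖projT pinv‖ + pv 2 * pinv 2 ≤ Ev * Ei :=
    calc ev * ‖projT pinv‖ + pv 2 * pinv 2 ≤ Ev * ‖pinv‖ :=
          mul_add_mul_le_mul_of_sq_add_sq_eq hEv (norm_nonneg _)
            (transverseEnergy_sq_add_sq hv) (norm_sq_eq_norm_projT_sq_add pinv).symm
      _ ≤ Ev * Ei := mul_le_mul_of_nonneg_left hi hEv
  rw [transverseMass, hmassless, invariantMass_sq hv]
  apply Real.sqrt_le_sqrt
  rw [norm_add_sq_real, inner_eq_inner_projT_add]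
  nlinarith [norm_nonneg pinv]

/-- Lemma 1: for pair production of two parents each of mass `m₀`,
each decaying to a visible and an invisible system,
`mT2(v₁, v₂, pTmiss, 0, 0) ≤ m₀`. -/
theorem mT2_le_parent_mass (m0 : ℝ) (Ev Ei : Fin 2 → ℝ)
    (pv pinv : Fin 2 → EuclideanSpace ℝ (Fin 3))
    (hv : ∀ n, ‖pv n‖ ≤ Ev n) (hi : ∀ n, ‖pinv n‖ ≤ Ei n)
    (hm : ∀ n, invariantMass (Ev n + Ei n) (pv n + pinv n) = m0) :
    mT2 (invariantMass (Ev 0) (pv 0)) (projT (pv 0))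
        (invariantMass (Ev 1) (pv 1)) (projT (pv 1))
        (projT (pinv 0) + projT (pinv 1)) 0 0 ≤ m0 := by
  have hparent (n : Fin 2) :
      transverseMass (invariantMass (Ev n) (pv n)) (projT (pv n)) 0 (projT (pinv n)) ≤ m0 :=
    hm n ▸ transverseMass_le_invariantMass (hv n) (hi n)
  exact (mT2_le_max_transverseMass _ _ _ _ _ _ rfl).trans (max_le (hparent 0) (hparent 1))
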